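/- For every n ≥ 1, setting δ := 1 if n is odd and δ := 0 if n is even, the element β_n := w₂^δ · ((f̄ n)² + w₂^n) belongs to the ideal J̄ n. (The inductive claim β_n ∈ J̄_n proved in Proposition 4.6(i).) -/
import Mathlib


/- Context: `P = 𝔽₂[w₁,w₂]`, `f̄ 0 = 1`, `f̄ 1 = w₁`,
`f̄ (n+2) = w₁·f̄(n+1) + w₂·f̄ n`, and `J̄ n = ⟨f̄ (n+1), w₂·f̄ n⟩`. -/

noncomputable section

open MvPolynomial

abbrev P2 : Type := MvPolynomial (Fin 2) (ZMod 2)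

def w₁ : P2 := X 0
def w₂ : P2 := X 1

def fbar : ℕ → P2
  | 0 => 1
  | 1 => w₁
  | n + 2 => w₁ * fbar (n + 1) + w₂ * fbar n

def Jbar (n : ℕ) : Ideal P2 := Ideal.span {fbar (n + 1), w₂ * fbar n}

lemma fbar_succ_succ (n : ℕ) : fbar (n + 2) = w₁ * fbar (n + 1) + w₂ * fbar n := rfl

lemma two_eq_zero_P2 : (2 : P2) = 0 := by
  have h : CharP P2 2 := inferInstance
  exact CharTwo.two_eq_zero

lemma key (m : ℕ) : ∃ u v : P2,
    u * (w₂ ^ ((m + 1) % 2) * fbar (m + 2)) +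
        v * (w₂ ^ ((m + 1) % 2 + 1) * fbar (m + 1))
      = w₂ ^ ((m + 1) % 2) * (fbar (m + 1) ^ 2 + w₂ ^ (m + 1)) := by
  have htwo := two_eq_zero_P2
  induction m with
  | zero =>
      refine ⟨1, 0, ?_⟩
      show (1 : P2) * (w₂ ^ 1 * fbar 2) + 0 * (w₂ ^ 2 * fbar 1)
          = w₂ ^ 1 * (fbar 1 ^ 2 + w₂ ^ 1)
      simp only [fbar]
      ring
  | succ m ih =>
      obtain ⟨u, v, huv⟩ := ih
      rcases Nat.even_or_odd m with hm | hm
      · -- m even : (m+1) % 2 = 1, (m+2) % 2 = 0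
        have hm2 : m % 2 = 0 := Nat.even_iff.mp hm
        have h1 : (m + 1) % 2 = 1 := by omega
        have h2 : (m + 1 + 1) % 2 = 0 := by omega
        rw [h1] at huv
        rw [h2]
        refine ⟨fbar (m + 1) - v * w₂, fbar m - u + v * w₁, ?_⟩
        rw [fbar_succ_succ m] at huv
        rw [fbar_succ_succ (m + 1), fbar_succ_succ m]
        linear_combination (-1 : P2) * huv + (-(w₂ * w₂ ^ (m + 1))) * htwo
      · -- m odd : (m+1) % 2 = 0, (m+2) % 2 = 1
        have hm2 : m % 2 = 1 := Nat.odd_iff.mp hm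
        have h1 : (m + 1) % 2 = 0 := by omega
        have h2 : (m + 1 + 1) % 2 = 1 := by omega
        rw [h1] at huv
        rw [h2]
        refine ⟨fbar (m + 1) - v * w₂, fbar m - u + v * w₁, ?_⟩
        rw [fbar_succ_succ m] at huv
        rw [fbar_succ_succ (m + 1), fbar_succ_succ m]
        linear_combination (-(w₂ ^ 2) : P2) * huv +
          (-(w₂ ^ 2 * w₂ ^ (m + 1))) * htwo

theorem beta_mem_Jbar (n : ℕ) (hn : 1 ≤ n) :
    w₂ ^ (if Odd n then 1 else 0) * ((fbar n) ^ 2 + w₂ ^ n) ∈ Jbar n := by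
  obtain ⟨m, rfl⟩ : ∃ m, n = m + 1 := ⟨n - 1, by omega⟩
  have hd : (if Odd (m + 1) then 1 else 0) = (m + 1) % 2 := by
    by_cases h : Odd (m + 1)
    · rw [if_pos h, Nat.odd_iff.mp h]
    · rw [if_neg h]
      have := Nat.even_iff.mp (Nat.not_odd_iff_even.mp h)
      omega
  rw [hd]
  obtain ⟨u, v, huv⟩ := key m
  rw [← huv]
  have hg1 : fbar (m + 2) ∈ Jbar (m + 1) :=
    Ideal.subset_span (Set.mem_insert _ _)
  have hg2 : w₂ * fbar (m + 1) ∈ Jbar (m + 1) :=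
    Ideal.subset_span (Set.mem_insert_of_mem _ rfl)
  apply Ideal.add_mem
  · have : u * (w₂ ^ ((m + 1) % 2) * fbar (m + 2))
        = (u * w₂ ^ ((m + 1) % 2)) * fbar (m + 2) := by ring
    rw [this]
    exact Ideal.mul_mem_left _ _ hg1
  · have : v * (w₂ ^ ((m + 1) % 2 + 1) * fbar (m + 1))
        = (v * w₂ ^ ((m + 1) % 2)) * (w₂ * fbar (m + 1)) := by ring
    rw [this]
    exact Ideal.mul_mem_left _ _ hg2

end
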